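/- arXiv:0704.2644 — 5 statements merged into one kernel-verified Lean document; each statement's English description precedes it below -/
import Mathlib

section
/- Let n ≥ 1 and let μ be a probability measure on a product of measurable spaces 𝒳₁ × ⋯ × 𝒳ₙ. For 1 ≤ j ≤ n let μ_j denote the marginal of μ on 𝒳_j and let μ^{(j)} denote the marginal of μ on 𝒳₁ × ⋯ × 𝒳_j. Suppose there is β ≥ 0 such that for every j ∈ {2, …, n}, d(μ^{(j)}, μ^{(j−1)} ⊗ μ_j) ≤ β. Then d(μ, μ₁ ⊗ μ₂ ⊗ ⋯ ⊗ μₙ) ≤ (n − 1)β. -/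
open MeasureTheory

/-- The variational distance `d(P,Q) = 2 sup_A |P(A) - Q(A)|` between two measures. -/
noncomputable def tvDist {Z : Type*} [MeasurableSpace Z] (P Q : Measure Z) : ℝ :=
  2 * ⨆ A : {A : Set Z // MeasurableSet A}, |(P A.1).toReal - (Q A.1).toReal|

/-- Projection of the full product onto the first `j` coordinates. -/
def prefixProj (X : ℕ → Type*) {j n : ℕ} (h : j ≤ n) (x : ∀ i : Fin n, X i) (i : Fin j) :
    X i := x (Fin.castLE h i)

/-!
The law of the first `j + 1` coordinates is within `β` of `μ⁽ʲ⁾ ⊗ μⱼ₊₁` by hypothesis, and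
`μ⁽ʲ⁾ ⊗ μⱼ₊₁` is as close to `(μ₁ ⊗ ⋯ ⊗ μⱼ) ⊗ μⱼ₊₁` as `μ⁽ʲ⁾` is to `μ₁ ⊗ ⋯ ⊗ μⱼ`, because
tensoring with a fixed probability measure `m` does not increase the variational distance. The
bound `(j - 1) β` then follows by induction on `j` and the triangle inequality.

Tensoring is a contraction since `(P ⊗ m) A = ∫ m (A_x) dP(x)`, and for `0 ≤ f ≤ 1` the difference
`∫ f dP - ∫ f dQ` is at most `P S - Q S`, where `S` is a Hahn set of `P - Q`.
-/

open scoped ENNReal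

section TotalVariation

variable {Z W : Type*} [MeasurableSpace Z] [MeasurableSpace W]

theorem tvDist_le_of_forall_abs_sub_le {P Q : Measure Z} {c : ℝ}
    (h : ∀ A, MeasurableSet A → |(P A).toReal - (Q A).toReal| ≤ c / 2) : tvDist P Q ≤ c := by
  have : Nonempty {A : Set Z // MeasurableSet A} := ⟨⟨∅, .empty⟩⟩
  have := ciSup_le fun A : {A : Set Z // MeasurableSet A} => h A.1 A.2
  rw [tvDist]
  linarith

theorem abs_sub_le_half_tvDist (P Q : Measure Z) [IsFiniteMeasure P] [IsFiniteMeasure Q]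
    {A : Set Z} (hA : MeasurableSet A) : |(P A).toReal - (Q A).toReal| ≤ tvDist P Q / 2 := by
  have hbdd : BddAbove (Set.range fun A : {A : Set Z // MeasurableSet A} =>
      |(P A.1).toReal - (Q A.1).toReal|) := by
    refine ⟨(P Set.univ).toReal + (Q Set.univ).toReal, ?_⟩
    rintro _ ⟨A, rfl⟩
    have hP := ENNReal.toReal_mono (measure_ne_top P _) (measure_mono (Set.subset_univ A.1))
    have hQ := ENNReal.toReal_mono (measure_ne_top Q _) (measure_mono (Set.subset_univ A.1))
    exact abs_sub_le_iff.2 ⟨by linarith [ENNReal.toReal_nonneg (a := Q A.1)],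
      by linarith [ENNReal.toReal_nonneg (a := P A.1)]⟩
  have := le_ciSup hbdd ⟨A, hA⟩
  rw [tvDist]
  linarith

@[simp]
theorem tvDist_self (P : Measure Z) : tvDist P P = 0 := by
  simp [tvDist]

theorem tvDist_comm (P Q : Measure Z) : tvDist P Q = tvDist Q P := by
  simp only [tvDist, abs_sub_comm]

theorem tvDist_triangle (P Q R : Measure Z) [IsFiniteMeasure P] [IsFiniteMeasure Q]
    [IsFiniteMeasure R] : tvDist P R ≤ tvDist P Q + tvDist Q R := by
  refine tvDist_le_of_forall_abs_sub_le fun A hA => ?_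
  linarith [abs_sub_le (P A).toReal (Q A).toReal (R A).toReal,
    abs_sub_le_half_tvDist P Q hA, abs_sub_le_half_tvDist Q R hA]

theorem tvDist_map_le (P Q : Measure Z) [IsFiniteMeasure P] [IsFiniteMeasure Q] {f : Z → W}
    (hf : Measurable f) : tvDist (P.map f) (Q.map f) ≤ tvDist P Q := by
  refine tvDist_le_of_forall_abs_sub_le fun A hA => ?_
  rw [Measure.map_apply hf hA, Measure.map_apply hf hA]
  exact abs_sub_le_half_tvDist P Q (hf hA)

theorem lintegral_le_lintegral_add_of_restrict_le {P Q : Measure Z} [IsFiniteMeasure Q]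
    {T : Set Z} (hT : MeasurableSet T) (hQP : Q.restrict T ≤ P.restrict T)
    (hPQ : P.restrict Tᶜ ≤ Q.restrict Tᶜ) {f : Z → ℝ≥0∞} (hf : ∀ x, f x ≤ 1) :
    ∫⁻ x, f x ∂P ≤ ∫⁻ x, f x ∂Q + (P T - Q T) := by
  have hT_le : ∫⁻ x in T, f x ∂P ≤ ∫⁻ x in T, f x ∂Q + (P T - Q T) := by
    calc ∫⁻ x in T, f x ∂P
        = ∫⁻ x, f x ∂(P.restrict T - Q.restrict T) + ∫⁻ x in T, f x ∂Q := by
          rw [← lintegral_add_measure, Measure.sub_add_cancel_of_le hQP]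
      _ ≤ (P.restrict T - Q.restrict T) Set.univ + ∫⁻ x in T, f x ∂Q := by
          gcongr
          exact (lintegral_mono hf).trans_eq lintegral_one
      _ = ∫⁻ x in T, f x ∂Q + (P T - Q T) := by
          rw [Measure.sub_apply .univ hQP, Measure.restrict_apply_univ,
            Measure.restrict_apply_univ, add_comm]
  calc ∫⁻ x, f x ∂P
      = ∫⁻ x in T, f x ∂P + ∫⁻ x in Tᶜ, f x ∂P := (lintegral_add_compl f hT).symm
    _ ≤ (∫⁻ x in T, f x ∂Q + (P T - Q T)) + ∫⁻ x in Tᶜ, f x ∂Q :=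
        add_le_add hT_le (lintegral_mono' hPQ le_rfl)
    _ = ∫⁻ x, f x ∂Q + (P T - Q T) := by
        rw [add_right_comm, lintegral_add_compl f hT]

theorem toReal_lintegral_sub_le_half_tvDist (P Q : Measure Z) [IsFiniteMeasure P]
    [IsFiniteMeasure Q] {f : Z → ℝ≥0∞} (hf : ∀ x, f x ≤ 1) :
    (∫⁻ x, f x ∂P).toReal - (∫⁻ x, f x ∂Q).toReal ≤ tvDist P Q / 2 := by
  obtain ⟨S, hS, hQP, hPQ⟩ := hahn_decomposition P Q
  have hQP' : Q.restrict S ≤ P.restrict S := Measure.le_iff.2 fun t ht => by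
    simpa only [Measure.restrict_apply ht] using hQP _ (ht.inter hS) Set.inter_subset_right
  have hPQ' : P.restrict Sᶜ ≤ Q.restrict Sᶜ := Measure.le_iff.2 fun t ht => by
    simpa only [Measure.restrict_apply ht] using hPQ _ (ht.inter hS.compl) Set.inter_subset_right
  have hfin : ∫⁻ x, f x ∂Q ≠ ∞ :=
    ((lintegral_mono hf).trans_lt (by simp [measure_lt_top])).ne
  have key := ENNReal.toReal_mono (by finiteness) <|
    lintegral_le_lintegral_add_of_restrict_le hS hQP' hPQ' hf
  rw [ENNReal.toReal_add hfin (by finiteness),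
    ENNReal.toReal_sub_of_le (hQP S hS subset_rfl) (by finiteness)] at key
  linarith [le_abs_self ((P S).toReal - (Q S).toReal), abs_sub_le_half_tvDist P Q hS]

theorem tvDist_prod_le (P Q : Measure Z) [IsFiniteMeasure P] [IsFiniteMeasure Q]
    (m : Measure W) [IsProbabilityMeasure m] : tvDist (P.prod m) (Q.prod m) ≤ tvDist P Q := by
  refine tvDist_le_of_forall_abs_sub_le fun A hA => ?_
  rw [Measure.prod_apply hA, Measure.prod_apply hA, abs_sub_le_iff]
  exact ⟨toReal_lintegral_sub_le_half_tvDist P Q fun _ => prob_le_one,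
    tvDist_comm Q P ▸ toReal_lintegral_sub_le_half_tvDist Q P fun _ => prob_le_one⟩

end TotalVariation

theorem Measure.map_pi_eq_pi_map_of_unique {ι Ω : Type*} [Unique ι] [Fintype ι]
    {W : ι → Type*} [∀ i, MeasurableSpace (W i)] [MeasurableSpace Ω] (P : Measure Ω)
    [IsFiniteMeasure P] {g : ∀ i, Ω → W i} (hg : ∀ i, Measurable (g i)) :
    P.map (fun ω i => g i ω) = Measure.pi fun i => P.map (g i) := by
  refine (Measure.pi_eq fun s hs => ?_).symm
  rw [Measure.map_apply (measurable_pi_lambda _ hg) (.univ_pi hs), Fintype.prod_unique,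
    Measure.map_apply (hg default) (hs default)]
  congr 1
  ext ω
  simp [Set.mem_pi, Unique.forall_iff]

theorem measurable_finSnoc {j : ℕ} {W : Fin (j + 1) → Type*} [∀ i, MeasurableSpace (W i)] :
    Measurable fun p : (∀ i : Fin j, W i.castSucc) × W (Fin.last j) => Fin.snoc p.1 p.2 := by
  refine measurable_pi_lambda _ fun i => Fin.lastCases ?_ (fun k => ?_) i
  · simpa only [Fin.snoc_last] using measurable_snd
  · simpa only [Fin.snoc_castSucc] using measurable_fst.eval

theorem Measure.map_snoc_prod_pi {j : ℕ} {W : Fin (j + 1) → Type*} [∀ i, MeasurableSpace (W i)]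
    (ν : ∀ i, Measure (W i)) [∀ i, SigmaFinite (ν i)] :
    ((Measure.pi fun i : Fin j => ν i.castSucc).prod (ν (Fin.last j))).map
      (fun p => Fin.snoc p.1 p.2) = Measure.pi ν := by
  refine (Measure.pi_eq fun s hs => ?_).symm
  have hpre : (fun p : (∀ i : Fin j, W i.castSucc) × W (Fin.last j) => Fin.snoc p.1 p.2) ⁻¹'
      Set.univ.pi s = (Set.univ.pi fun i : Fin j => s i.castSucc) ×ˢ s (Fin.last j) := by
    ext p
    simp [Fin.forall_fin_succ', and_comm]
  rw [Measure.map_apply measurable_finSnoc (.univ_pi hs), hpre, Measure.prod_prod,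
    Measure.pi_pi, Fin.prod_univ_castSucc]

theorem tvDist_map_prefixProj_pi_le {n : ℕ} {X : ℕ → Type*} [∀ i, MeasurableSpace (X i)]
    (μ : Measure (∀ i : Fin n, X i)) [IsProbabilityMeasure μ] {β : ℝ}
    (h : ∀ j : ℕ, 1 ≤ j → ∀ hjn : j < n,
      tvDist (μ.map (prefixProj X hjn))
        (((μ.map (prefixProj X hjn.le)).prod (μ.map (fun x => x ⟨j, hjn⟩))).map
          (fun p => Fin.snoc (α := fun i : Fin (j + 1) => X i) p.1 p.2)) ≤ β)
    (j : ℕ) (hj : j + 1 ≤ n) :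
    tvDist (μ.map (prefixProj X hj))
      (Measure.pi fun i : Fin (j + 1) => μ.map fun x => x (Fin.castLE hj i)) ≤ j * β := by
  induction j with
  | zero =>
    rw [← Measure.map_pi_eq_pi_map_of_unique (ι := Fin 1) μ fun i => measurable_pi_apply _]
    exact (tvDist_self _).le.trans_eq (by simp)
  | succ j ih =>
    have hjn : j + 1 < n := hj
    have : IsProbabilityMeasure (μ.map fun x => x ⟨j + 1, hjn⟩) :=
      Measure.isProbabilityMeasure_map (measurable_pi_apply _).aemeasurable
    set m := μ.map fun x => x ⟨j + 1, hjn⟩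
    set snoc := fun p : (∀ i : Fin (j + 1), X i) × X (j + 1) =>
      Fin.snoc (α := fun i : Fin (j + 2) => X i) p.1 p.2
    have h1 := h (j + 1) j.succ_pos hjn
    have h2 : tvDist (((μ.map (prefixProj X hjn.le)).prod m).map snoc)
        (((Measure.pi fun i : Fin (j + 1) => μ.map fun x => x (Fin.castLE hjn.le i)).prod m).map
          snoc) ≤ j * β :=
      (tvDist_map_le _ _ measurable_finSnoc).trans ((tvDist_prod_le _ _ _).trans (ih hjn.le))
    rw [← Measure.map_snoc_prod_pi]
    calc _ ≤ _ + _ := tvDist_triangle _ (((μ.map (prefixProj X hjn.le)).prod m).map snoc) _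
      _ ≤ β + j * β := add_le_add h1 h2
      _ = (j + 1 : ℕ) * β := by push_cast; ring

theorem stmt_0_general (n : ℕ) (hn : 1 ≤ n) (X : ℕ → Type*) [∀ i, MeasurableSpace (X i)]
    (μ : Measure (∀ i : Fin n, X i)) [IsProbabilityMeasure μ]
    (β : ℝ)
    (h : ∀ j : ℕ, 1 ≤ j → ∀ hjn : j < n,
      tvDist (μ.map (prefixProj X hjn))
        (((μ.map (prefixProj X hjn.le)).prod (μ.map (fun x => x ⟨j, hjn⟩))).map
          (fun p => Fin.snoc (α := fun i : Fin (j + 1) => X i) p.1 p.2)) ≤ β) :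
    tvDist μ (Measure.pi (fun i : Fin n => μ.map (fun x => x i))) ≤ ((n : ℝ) - 1) * β := by
  obtain ⟨k, rfl⟩ : ∃ k, n = k + 1 := ⟨n - 1, by omega⟩
  have hk := tvDist_map_prefixProj_pi_le μ h k le_rfl
  rw [show μ.map (prefixProj X le_rfl) = μ from Measure.map_id] at hk
  simpa using hk

/-- **Blocking lemma.** If `μ` is a probability measure on `𝒳₁ × ⋯ × 𝒳ₙ` such that, for every
`j ∈ {2,…,n}` (here `0`-indexed: for all `1 ≤ j < n`), the marginal of `μ` on the first `j+1`
coordinates is within variational distance `β` of the product of the marginal on the first `j`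
coordinates with the marginal on the `j`-th coordinate, then `μ` is within variational distance
`(n-1)β` of the product of its one-dimensional marginals. -/
theorem stmt_0 (n : ℕ) (hn : 1 ≤ n) (X : ℕ → Type*) [∀ i, MeasurableSpace (X i)]
    (μ : Measure (∀ i : Fin n, X i)) [IsProbabilityMeasure μ]
    (β : ℝ) (hβ : 0 ≤ β)
    (h : ∀ j : ℕ, 1 ≤ j → ∀ hjn : j < n,
      tvDist (μ.map (prefixProj X hjn))
        (((μ.map (prefixProj X hjn.le)).prod (μ.map (fun x => x ⟨j, hjn⟩))).map
          (fun p => Fin.snoc (α := fun i : Fin (j + 1) => X i) p.1 p.2)) ≤ β) :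
    tvDist μ (Measure.pi (fun i : Fin n => μ.map (fun x => x i))) ≤ ((n : ℝ) - 1) * β :=
  stmt_0_general n hn X μ β h
end

section
/- There exists an injective map s from the positive integers to finite binary strings satisfying the prefix condition (for i ≠ j, s(i) is not a prefix of s(j)) such that the length of s(i) satisfies ℓ(s(i)) ≤ log₂ i + 2 log₂(log₂ i + 1) + 2 for every i ≥ 1. -/
/-!
Write `i` in binary, `k = ⌊log₂ i⌋ + 1` digits, and precede it by Elias' γ code of `k`: the binary
expansion of `k` behind `⌊log₂ k⌋` zeros. The zeros announce how many digits of `k` follow, and `k`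
announces how many digits of `i` follow, so the code is prefix-free; its length is
`2⌊log₂ k⌋ + 1 + k ≤ 2 log₂ (log₂ i + 1) + log₂ i + 2`.
-/

namespace Elias

open List

def PrefixFreeOn {α β : Type*} (s : Set α) (c : α → List β) : Prop :=
  ∀ ⦃a⦄, a ∈ s → ∀ ⦃b⦄, b ∈ s → c a <+: c b → a = b

theorem PrefixFreeOn.injOn {α β : Type*} {s : Set α} {c : α → List β}
    (hc : PrefixFreeOn s c) : Set.InjOn c s :=
  fun _ ha _ hb hab => hc ha hb (hab ▸ prefix_refl _)

theorem PrefixFreeOn.append_length {α β : Type*} {s : Set ℕ} {c : ℕ → List β}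
    {t : Set α} {w : α → List β} (hc : PrefixFreeOn s c) (hw : Set.InjOn w t)
    (hmaps : ∀ x ∈ t, (w x).length ∈ s) :
    PrefixFreeOn t fun x => c (w x).length ++ w x := by
  intro x hx y hy (h : c _ ++ _ <+: c _ ++ _)
  have hlen : (w x).length = (w y).length := by
    rcases prefix_or_prefix_of_prefix ((prefix_append _ _).trans h) (prefix_append _ _) with
      hxy | hyx
    · exact hc (hmaps x hx) (hmaps y hy) hxy
    · exact (hc (hmaps y hy) (hmaps x hx) hyx).symm
  rw [hlen, prefix_append_right_inj] at h
  exact hw hx hy (h.eq_of_length hlen)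

theorem replicate_append_cons_prefix {α : Type*} {a b : α} (hab : a ≠ b) {m n : ℕ}
    {u v : List α} (h : replicate m a ++ b :: u <+: replicate n a ++ b :: v) :
    m = n ∧ u <+: v := by
  induction m generalizing n with
  | zero => cases n <;> simp_all [replicate_succ, Ne.symm hab]
  | succ m ih =>
    cases n with
    | zero => simp_all [replicate_succ]
    | succ n => simpa [replicate_succ] using ih (by simpa [replicate_succ] using h)

/-- Most significant bit first. -/
def binary (n : ℕ) : List Bool := n.bits.reverse

theorem binary_injective : Function.Injective binary := fun a b h =>
  Nat.digits.injective 2 <| by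
    rw [Nat.digits_two_eq_bits, Nat.digits_two_eq_bits, reverse_injective h]

theorem length_binary {n : ℕ} (hn : n ≠ 0) : (binary n).length = Nat.log 2 n + 1 := by
  rw [binary, length_reverse, ← Nat.length_digits 2 n one_lt_two hn, Nat.digits_two_eq_bits,
    length_map]

theorem getLast?_bits {n : ℕ} (hn : n ≠ 0) : n.bits.getLast? = some true := by
  induction n using Nat.binaryRec' with
  | zero => exact absurd rfl hn
  | bit b n h ih =>
    rw [Nat.bits_append_bit _ _ h]
    by_cases hn0 : n = 0
    · simp [hn0, h hn0]
    · simp [getLast?_cons, ih hn0]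

theorem exists_binary_eq_true_cons {n : ℕ} (hn : n ≠ 0) : ∃ u, binary n = true :: u :=
  head?_eq_some_iff.mp (by rw [binary, head?_reverse, getLast?_bits hn])

def gamma (k : ℕ) : List Bool := replicate (Nat.log 2 k) false ++ binary k

theorem length_gamma {k : ℕ} (hk : k ≠ 0) : (gamma k).length = 2 * Nat.log 2 k + 1 := by
  rw [gamma, length_append, length_replicate, length_binary hk]
  ring

/-- The number of leading zeros announces the length of the binary expansion that follows. -/
theorem prefixFreeOn_gamma : PrefixFreeOn {k | k ≠ 0} gamma := by
  intro a ha b hb h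
  obtain ⟨u, hu⟩ := exists_binary_eq_true_cons ha
  obtain ⟨v, hv⟩ := exists_binary_eq_true_cons hb
  rw [gamma, gamma, hu, hv] at h
  obtain ⟨hlog, huv⟩ := replicate_append_cons_prefix Bool.false_ne_true h
  have hlen : u.length = v.length := by
    have hua := length_binary ha
    have hvb := length_binary hb
    rw [hu, length_cons] at hua
    rw [hv, length_cons] at hvb
    omega
  exact binary_injective (by rw [hu, hv, huv.eq_of_length hlen])

/-- Elias' δ code, without dropping the leading one of the binary expansion. -/
def delta (i : ℕ) : List Bool := gamma (binary i).length ++ binary i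

theorem prefixFreeOn_delta : PrefixFreeOn {i | i ≠ 0} delta :=
  prefixFreeOn_gamma.append_length binary_injective.injOn fun i hi => by
    simp [length_binary hi]

theorem length_delta {i : ℕ} (hi : i ≠ 0) :
    (delta i).length = 2 * Nat.log 2 (Nat.log 2 i + 1) + Nat.log 2 i + 2 := by
  rw [delta, length_append, length_binary hi, length_gamma (Nat.succ_ne_zero _)]
  ring

theorem length_delta_le {i : ℕ} (hi : i ≠ 0) :
    ((delta i).length : ℝ) ≤ Real.logb 2 i + 2 * Real.logb 2 (Real.logb 2 i + 1) + 2 := by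
  have hlog : (Nat.log 2 i : ℝ) ≤ Real.logb 2 i := mod_cast Real.natLog_le_logb i 2
  have hloglog : (Nat.log 2 (Nat.log 2 i + 1) : ℝ) ≤ Real.logb 2 (Real.logb 2 i + 1) :=
    calc (Nat.log 2 (Nat.log 2 i + 1) : ℝ)
        ≤ Real.logb 2 (Nat.log 2 i + 1 : ℕ) := mod_cast Real.natLog_le_logb _ 2
      _ ≤ Real.logb 2 (Real.logb 2 i + 1) :=
        Real.logb_le_logb_of_le one_lt_two (by positivity) (by push_cast; linarith)
  rw [length_delta hi]
  push_cast
  linarith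

end Elias

/-- **Elias' universal representation of the integers.** There is an injective, prefix-free
encoding `s` of the positive integers into finite binary strings with
`ℓ(s(i)) ≤ log₂ i + 2 log₂(log₂ i + 1) + 2`. -/
theorem stmt_2 :
    ∃ s : ℕ+ → List Bool,
      Function.Injective s ∧
      (∀ i j : ℕ+, i ≠ j → ¬ (s i <+: s j)) ∧
      (∀ i : ℕ+, ((s i).length : ℝ) ≤
        Real.logb 2 (i : ℝ) + 2 * Real.logb 2 (Real.logb 2 (i : ℝ) + 1) + 2) :=
  ⟨fun i => Elias.delta i,
    fun i j h => PNat.coe_injective (Elias.prefixFreeOn_delta.injOn i.ne_zero j.ne_zero h),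
    fun i j hij h => hij (PNat.coe_injective (Elias.prefixFreeOn_delta i.ne_zero j.ne_zero h)),
    fun i => Elias.length_delta_le i.ne_zero⟩
end

section
/- Let m, m' ∈ ℝ and σ, σ' > 0, and let N(m, σ²) and N(m', σ'²) be the Gaussian distributions on ℝ with means m, m' and variances σ², σ'². Then the Kullback–Leibler divergence satisfies D(N(m, σ²) ‖ N(m', σ'²)) ≤ (1 + σ'/σ)² · ((m − m')² + (σ − σ')²) / (2 σ'²). -/
open MeasureTheory ProbabilityTheory
open scoped Classical

/-- The Kullback–Leibler divergence (in nats): `D(P‖Q) = ∫ log(dP/dQ) dP` when `P ≪ Q` (and the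
log-likelihood ratio is integrable), and `+∞` otherwise. -/
noncomputable def klDiv {Z : Type*} [MeasurableSpace Z] (P Q : Measure Z) : ENNReal :=
  if P ≪ Q ∧ Integrable (llr P Q) P then ENNReal.ofReal (∫ z, llr P Q z ∂P) else ⊤

/-!
The log-likelihood ratio of two Gaussians is a quadratic polynomial in `x`, so its mean under
`N(m, σ²)` only involves the first two moments, which gives the closed form
`D = log (σ'/σ) + (σ² + (m - m')²) / (2σ'²) - 1/2`. After `log t ≤ t - 1`, the claimed bound
exceeds this by `((m - m')² σ' (2σ + σ') + σ'² (σ - σ')²) / (2σ²σ'²) ≥ 0`.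
-/

open Real
open scoped ENNReal NNReal

namespace ProbabilityTheory

variable {μ μ' : ℝ} {v v' : ℝ≥0}

lemma integrable_sub_sq_gaussianReal (c : ℝ) :
    Integrable (fun x => (x - c) ^ 2) (gaussianReal μ v) :=
  ((memLp_id_gaussianReal 2).sub (memLp_const c)).integrable_sq

lemma integral_sub_sq_gaussianReal (c : ℝ) :
    ∫ x, (x - c) ^ 2 ∂gaussianReal μ v = v + (μ - c) ^ 2 := by
  have hL2 : MemLp (fun x => x - c) 2 (gaussianReal μ v) :=
    (memLp_id_gaussianReal 2).sub (memLp_const c)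
  have hvar := variance_eq_sub hL2
  rw [variance_sub_const (by fun_prop) c, variance_fun_id_gaussianReal,
    integral_sub (f := fun x => x) ((memLp_id_gaussianReal 1).integrable le_rfl)
      (integrable_const c), integral_const, integral_id_gaussianReal] at hvar
  simp only [Pi.pow_apply, probReal_univ, one_smul] at hvar
  linarith

lemma log_gaussianPDFReal (hv : v ≠ 0) (x : ℝ) :
    log (gaussianPDFReal μ v x) = -log (2 * π * v) / 2 - (x - μ) ^ 2 / (2 * v) := by
  rw [gaussianPDFReal, log_mul (by positivity) (exp_ne_zero _), log_exp, log_inv,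
    log_sqrt (by positivity)]
  ring

lemma llr_gaussianReal (hv : v ≠ 0) (hv' : v' ≠ 0) :
    llr (gaussianReal μ v) (gaussianReal μ' v') =ᵐ[gaussianReal μ v]
      fun x => log (v' / v) / 2 + (x - μ') ^ 2 / (2 * v') - (x - μ) ^ 2 / (2 * v) := by
  have hPQ : gaussianReal μ v ≪ gaussianReal μ' v' :=
    (gaussianReal_absolutelyContinuous μ hv).trans (gaussianReal_absolutelyContinuous' μ' hv')
  have hratio : (gaussianReal μ v).rnDeriv (gaussianReal μ' v') =ᵐ[gaussianReal μ' v']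
      fun x => gaussianPDF μ v x / gaussianPDF μ' v' x := by
    filter_upwards [Measure.rnDeriv_eq_div (gaussianReal_absolutelyContinuous μ hv)
        (gaussianReal_absolutelyContinuous μ' hv'),
      gaussianReal_absolutelyContinuous μ' hv' (rnDeriv_gaussianReal μ v),
      gaussianReal_absolutelyContinuous μ' hv' (rnDeriv_gaussianReal μ' v')] with x h h₁ h₂
    rw [h, h₁, h₂]
  filter_upwards [hPQ hratio] with x hx
  rw [llr, hx, ENNReal.toReal_div, toReal_gaussianPDF, toReal_gaussianPDF,
    log_div (gaussianPDFReal_pos _ _ _ hv).ne' (gaussianPDFReal_pos _ _ _ hv').ne',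
    log_gaussianPDFReal hv, log_gaussianPDFReal hv', log_div (by positivity) (by positivity),
    log_mul (x := 2 * π) (y := v) (by positivity) (by positivity),
    log_mul (x := 2 * π) (y := v') (by positivity) (by positivity)]
  ring

lemma klDiv_gaussianReal (hv : v ≠ 0) (hv' : v' ≠ 0) :
    klDiv (gaussianReal μ v) (gaussianReal μ' v') =
      ENNReal.ofReal (log (v' / v) / 2 + (v + (μ - μ') ^ 2) / (2 * v') - 1 / 2) := by
  have hPQ : gaussianReal μ v ≪ gaussianReal μ' v' :=
    (gaussianReal_absolutelyContinuous μ hv).trans (gaussianReal_absolutelyContinuous' μ' hv')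
  have hllr := llr_gaussianReal (μ := μ) (μ' := μ') hv hv'
  have hint' := (integrable_sub_sq_gaussianReal (μ := μ) (v := v) μ').div_const (2 * v')
  have hint := (integrable_sub_sq_gaussianReal (μ := μ) (v := v) μ).div_const (2 * v)
  have hint_add : Integrable (fun x => log (v' / v) / 2 + (x - μ') ^ 2 / (2 * v'))
      (gaussianReal μ v) :=
    (integrable_const _).add hint'
  rw [klDiv, if_pos ⟨hPQ, (hint_add.sub hint).congr hllr.symm⟩, integral_congr_ae hllr,
    integral_sub hint_add hint, integral_add (integrable_const _) hint', integral_const,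
    probReal_univ, one_smul, integral_div, integral_div, integral_sub_sq_gaussianReal,
    integral_sub_sq_gaussianReal]
  congr 1
  field_simp
  ring

end ProbabilityTheory

lemma log_div_add_div_sub_half_le {σ σ' : ℝ} (hσ : 0 < σ) (hσ' : 0 < σ') (d : ℝ) :
    log (σ' / σ) + (σ ^ 2 + d ^ 2) / (2 * σ' ^ 2) - 1 / 2 ≤
      (1 + σ' / σ) ^ 2 * (d ^ 2 + (σ - σ') ^ 2) / (2 * σ' ^ 2) := by
  suffices σ' / σ - 1 + (σ ^ 2 + d ^ 2) / (2 * σ' ^ 2) - 1 / 2 ≤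
      (1 + σ' / σ) ^ 2 * (d ^ 2 + (σ - σ') ^ 2) / (2 * σ' ^ 2) by
    linarith [log_le_sub_one_of_pos (div_pos hσ' hσ)]
  have hgap : (1 + σ' / σ) ^ 2 * (d ^ 2 + (σ - σ') ^ 2) / (2 * σ' ^ 2) -
      (σ' / σ - 1 + (σ ^ 2 + d ^ 2) / (2 * σ' ^ 2) - 1 / 2) =
      (d ^ 2 * σ' * (2 * σ + σ') + (σ' * (σ - σ')) ^ 2) / (2 * σ ^ 2 * σ' ^ 2) := by
    field_simp
    ring
  rw [← sub_nonneg, hgap]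
  positivity

/-- **KL divergence bound for Gaussians.** For `m, m' ∈ ℝ` and `σ, σ' > 0`,
`D(N(m,σ²) ‖ N(m',σ'²)) ≤ (1 + σ'/σ)² ((m-m')² + (σ-σ')²) / (2σ'²)`. -/
theorem stmt_5 (m m' σ σ' : ℝ) (hσ : 0 < σ) (hσ' : 0 < σ') :
    klDiv (gaussianReal m (Real.toNNReal σ ^ 2)) (gaussianReal m' (Real.toNNReal σ' ^ 2)) ≤
      ENNReal.ofReal ((1 + σ' / σ) ^ 2 * ((m - m') ^ 2 + (σ - σ') ^ 2) / (2 * σ' ^ 2)) := by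
  have hv : Real.toNNReal σ ^ 2 ≠ 0 := pow_ne_zero _ (Real.toNNReal_pos.mpr hσ).ne'
  have hv' : Real.toNNReal σ' ^ 2 ≠ 0 := pow_ne_zero _ (Real.toNNReal_pos.mpr hσ').ne'
  have hlog : log ((σ' ^ 2 : ℝ) / σ ^ 2) / 2 = log (σ' / σ) := by
    rw [← div_pow, log_pow]; ring
  rw [klDiv_gaussianReal hv hv']
  refine ENNReal.ofReal_le_ofReal ?_
  push_cast [Real.coe_toNNReal _ hσ.le, Real.coe_toNNReal _ hσ'.le]
  rw [hlog]
  exact log_div_add_div_sub_half_le hσ hσ' (m - m')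
end

section
/- Let θ = (m, σ) with m ∈ ℝ and σ > 0, and fix δ ∈ (0, σ). Then for every θ' = (m', σ') with σ' > 0 and ‖θ − θ'‖ < δ (Euclidean norm on ℝ²), and for every n ≥ 1, the variational distance between the n-fold products of the corresponding Gaussian distributions satisfies d(N(m, σ²)^⊗n, N(m', σ'²)^⊗n) ≤ √n · (3/(σ − δ)) · ‖θ − θ'‖. -/
open MeasureTheory ProbabilityTheory

/-! Le Cam's inequality bounds the variational distance between measures with densities `p` and
`q` by `2 √(1 - ρ²)`, where `ρ = ∫ √(p q)` is their Bhattacharyya coefficient. The coefficient is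
multiplicative under products, so for the `n`-fold products it is `ρⁿ`, and Bernoulli's inequality
gives `1 - ρ²ⁿ ≤ 2n (1 - ρ)`. For two Gaussians `ρ` is explicit,
`ρ = √(2σσ'/(σ² + σ'²)) exp(-(m - m')²/(4(σ² + σ'²)))`, and `1 - ρ ≤ ‖θ - θ'‖²/(σ² + σ'²)`,
where `σ² + σ'² ≥ 2(σ - δ)²`. -/

open Real

section LeCam

variable {α : Type*} [MeasurableSpace α] {μ : Measure α}

theorem tvDist_le_two_mul {P Q : Measure α} {c : ℝ}
    (h : ∀ A, MeasurableSet A → |(P A).toReal - (Q A).toReal| ≤ c) : tvDist P Q ≤ 2 * c := by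
  have : Nonempty {A : Set α // MeasurableSet A} := ⟨⟨∅, MeasurableSet.empty⟩⟩
  exact mul_le_mul_of_nonneg_left (ciSup_le fun A => h A.1 A.2) zero_le_two

theorem withDensity_ofReal_apply_eq_ofReal_setIntegral {p : α → ℝ} (hp0 : 0 ≤ p)
    (hp : Integrable p μ) {s : Set α} (hs : MeasurableSet s) :
    μ.withDensity (fun x => ENNReal.ofReal (p x)) s = ENNReal.ofReal (∫ x in s, p x ∂μ) := by
  rw [withDensity_apply _ hs, ofReal_integral_eq_lintegral_ofReal hp.integrableOn
    (Filter.Eventually.of_forall hp0)]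

theorem integral_mul_le_sqrt_mul_sqrt {f g : α → ℝ} (hf0 : 0 ≤ f) (hg0 : 0 ≤ g)
    (hf : MemLp f 2 μ) (hg : MemLp g 2 μ) :
    ∫ x, f x * g x ∂μ ≤ √(∫ x, f x ^ 2 ∂μ) * √(∫ x, g x ^ 2 ∂μ) := by
  have h := integral_mul_le_Lp_mul_Lq_of_nonneg Real.HolderConjugate.two_two
    (Filter.Eventually.of_forall hf0) (Filter.Eventually.of_forall hg0)
    (by rwa [ENNReal.ofReal_ofNat]) (by rwa [ENNReal.ofReal_ofNat])
  simpa only [Real.rpow_two, ← Real.sqrt_eq_rpow] using h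

theorem MeasureTheory.Integrable.memLp_two_sqrt {p : α → ℝ} (hp : Integrable p μ) (hp0 : 0 ≤ p) :
    MemLp (fun x => √(p x)) 2 μ :=
  (memLp_two_iff_integrable_sq
    (Real.continuous_sqrt.comp_aestronglyMeasurable hp.aestronglyMeasurable)).2 <|
    hp.congr (Filter.Eventually.of_forall fun x => (Real.sq_sqrt (hp0 x)).symm)

theorem setIntegral_le_half_integral_abs {h : α → ℝ} (hh : Integrable h μ)
    (h0 : ∫ x, h x ∂μ = 0) (s : Set α) :
    ∫ x in s, h x ∂μ ≤ (∫ x, |h x| ∂μ) / 2 := by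
  have hpos : Integrable (fun x => max (h x) 0) μ := hh.pos_part
  calc ∫ x in s, h x ∂μ ≤ ∫ x in s, max (h x) 0 ∂μ :=
        setIntegral_mono hh.integrableOn hpos.integrableOn fun x => le_max_left _ _
    _ ≤ ∫ x, max (h x) 0 ∂μ :=
        setIntegral_le_integral hpos (Filter.Eventually.of_forall fun x => le_max_right _ _)
    _ = (∫ x, h x ∂μ + ∫ x, |h x| ∂μ) / 2 := by
        rw [← integral_add hh hh.abs, ← integral_div]
        congr 1 with x
        rcases le_total 0 (h x) with hx | hx
        · rw [max_eq_left hx, abs_of_nonneg hx]; ring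
        · rw [max_eq_right hx, abs_of_nonpos hx]; ring
    _ = (∫ x, |h x| ∂μ) / 2 := by rw [h0, zero_add]

variable {p q : α → ℝ}

/-- Le Cam: `|p - q| = |√p - √q| (√p + √q)`, and by Cauchy–Schwarz its integral is at most
`‖√p - √q‖₂ ‖√p + √q‖₂ = √(2 - 2ρ) √(2 + 2ρ)`, where `ρ = ∫ √p √q`. -/
theorem integral_abs_sub_le_two_mul_sqrt (hp0 : 0 ≤ p) (hq0 : 0 ≤ q)
    (hp : Integrable p μ) (hq : Integrable q μ) (hp1 : ∫ x, p x ∂μ = 1)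
    (hq1 : ∫ x, q x ∂μ = 1) :
    ∫ x, |p x - q x| ∂μ ≤ 2 * √(1 - (∫ x, √(p x) * √(q x) ∂μ) ^ 2) := by
  set u : α → ℝ := fun x => √(p x)
  set w : α → ℝ := fun x => √(q x)
  set ρ := ∫ x, u x * w x ∂μ
  have hu : MemLp u 2 μ := hp.memLp_two_sqrt hp0
  have hw : MemLp w 2 μ := hq.memLp_two_sqrt hq0
  have hu2 (x : α) : u x ^ 2 = p x := Real.sq_sqrt (hp0 x)
  have hw2 (x : α) : w x ^ 2 = q x := Real.sq_sqrt (hq0 x)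
  have hsq (ε : ℝ) : ∫ x, (u x + ε * w x) ^ 2 ∂μ = 1 + 2 * ε * ρ + ε ^ 2 := by
    have hexp (x : α) : (u x + ε * w x) ^ 2 = p x + 2 * ε * (u x * w x) + ε ^ 2 * q x := by
      rw [← hu2, ← hw2]; ring
    have huw : Integrable (fun x => u x * w x) μ := hu.integrable_mul hw
    have hi : Integrable (fun x => p x + 2 * ε * (u x * w x)) μ := hp.add (huw.const_mul _)
    simp only [hexp]
    rw [integral_add hi (hq.const_mul _), integral_add hp (huw.const_mul _),
      integral_const_mul, integral_const_mul, hp1, hq1, mul_one]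
  have hfactor (x : α) : |p x - q x| = |u x - w x| * (u x + w x) := by
    rw [← hu2, ← hw2, sq_sub_sq, abs_mul, mul_comm,
      abs_of_nonneg (add_nonneg (Real.sqrt_nonneg _) (Real.sqrt_nonneg _))]
  have hminus := hsq (-1)
  have hplus := hsq 1
  simp only [neg_one_mul, ← sub_eq_add_neg, one_mul] at hminus hplus
  calc ∫ x, |p x - q x| ∂μ = ∫ x, |u x - w x| * (u x + w x) ∂μ := by simp only [hfactor]
    _ ≤ √(∫ x, |u x - w x| ^ 2 ∂μ) * √(∫ x, (u x + w x) ^ 2 ∂μ) :=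
        integral_mul_le_sqrt_mul_sqrt (fun x => abs_nonneg _)
          (fun x => add_nonneg (Real.sqrt_nonneg _) (Real.sqrt_nonneg _)) (hu.sub hw).abs
          (hu.add hw)
    _ = 2 * √(1 - ρ ^ 2) := by
        simp only [sq_abs]
        rw [← Real.sqrt_mul (integral_nonneg fun x => sq_nonneg _), hminus, hplus,
          show (1 + 2 * -1 * ρ + (-1) ^ 2) * (1 + 2 * 1 * ρ + 1 ^ 2) = 2 ^ 2 * (1 - ρ ^ 2) by
            ring,
          Real.sqrt_mul (sq_nonneg 2), Real.sqrt_sq zero_le_two]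

theorem tvDist_withDensity_ofReal_le (hp0 : 0 ≤ p) (hq0 : 0 ≤ q)
    (hp : Integrable p μ) (hq : Integrable q μ) (hp1 : ∫ x, p x ∂μ = 1)
    (hq1 : ∫ x, q x ∂μ = 1) :
    tvDist (μ.withDensity fun x => ENNReal.ofReal (p x))
        (μ.withDensity fun x => ENNReal.ofReal (q x)) ≤
      2 * √(1 - (∫ x, √(p x) * √(q x) ∂μ) ^ 2) := by
  refine tvDist_le_two_mul fun A hA => ?_
  have hhalf {f g : α → ℝ} (hf : Integrable f μ) (hg : Integrable g μ)
      (hfg : ∫ x, f x ∂μ = ∫ x, g x ∂μ) :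
      ∫ x in A, f x ∂μ - ∫ x in A, g x ∂μ ≤ (∫ x, |f x - g x| ∂μ) / 2 := by
    rw [← integral_sub hf.integrableOn hg.integrableOn]
    exact setIntegral_le_half_integral_abs (h := fun x => f x - g x) (hf.sub hg)
      (by rw [integral_sub hf hg, hfg, sub_self]) A
  have hLeCam := integral_abs_sub_le_two_mul_sqrt hp0 hq0 hp hq hp1 hq1
  rw [withDensity_ofReal_apply_eq_ofReal_setIntegral hp0 hp hA,
    withDensity_ofReal_apply_eq_ofReal_setIntegral hq0 hq hA,
    ENNReal.toReal_ofReal (setIntegral_nonneg hA fun x _ => hp0 x),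
    ENNReal.toReal_ofReal (setIntegral_nonneg hA fun x _ => hq0 x), abs_sub_le_iff]
  have hqp := hhalf hq hp (hq1.trans hp1.symm)
  simp only [abs_sub_comm (q _)] at hqp
  constructor <;> linarith [hhalf hp hq (hp1.trans hq1.symm)]

end LeCam

section Product

variable {ι : Type*} [Fintype ι]

theorem Set.indicator_univ_pi_prod {α : ι → Type*} {M : Type*} [CommMonoidWithZero M]
    (s : ∀ i, Set (α i)) (f : ∀ i, α i → M) (x : ∀ i, α i) :
    (Set.univ.pi s).indicator (fun y => ∏ i, f i (y i)) x = ∏ i, (s i).indicator (f i) (x i) := by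
  classical
  simp [Set.indicator_apply, Finset.prod_ite_zero]

theorem MeasureTheory.Measure.pi_withDensity_ofReal {α : ι → Type*} [∀ i, MeasurableSpace (α i)]
    {μ : ∀ i, Measure (α i)} [∀ i, SigmaFinite (μ i)] {p : ∀ i, α i → ℝ} (hp0 : ∀ i, 0 ≤ p i)
    (hp : ∀ i, Integrable (p i) (μ i)) :
    Measure.pi (fun i => (μ i).withDensity fun x => ENNReal.ofReal (p i x)) =
      (Measure.pi μ).withDensity fun x => ENNReal.ofReal (∏ i, p i (x i)) := by
  refine Measure.pi_eq fun s hs => ?_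
  have hprod0 : 0 ≤ fun x : ∀ i, α i => ∏ i, p i (x i) :=
    fun x => Finset.prod_nonneg fun i _ => hp0 i _
  rw [withDensity_ofReal_apply_eq_ofReal_setIntegral hprod0
      (Integrable.fintype_prod_dep hp) (MeasurableSet.univ_pi hs),
    ← integral_indicator (MeasurableSet.univ_pi hs)]
  simp only [Set.indicator_univ_pi_prod, integral_fintype_prod_eq_prod, integral_indicator (hs _),
    withDensity_ofReal_apply_eq_ofReal_setIntegral (hp0 _) (hp _) (hs _)]
  exact ENNReal.ofReal_prod_of_nonneg fun i _ => setIntegral_nonneg (hs i) fun x _ => hp0 i x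

variable {α : Type*} [MeasurableSpace α] {μ : Measure α} [SigmaFinite μ] {p q : α → ℝ}

theorem tvDist_pi_withDensity_ofReal_le (hp0 : 0 ≤ p) (hq0 : 0 ≤ q)
    (hp : Integrable p μ) (hq : Integrable q μ) (hp1 : ∫ x, p x ∂μ = 1)
    (hq1 : ∫ x, q x ∂μ = 1) :
    tvDist (Measure.pi fun _ : ι => μ.withDensity fun x => ENNReal.ofReal (p x))
        (Measure.pi fun _ : ι => μ.withDensity fun x => ENNReal.ofReal (q x)) ≤
      2 * √(1 - (∫ x, √(p x) * √(q x) ∂μ) ^ (2 * Fintype.card ι)) := by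
  have hprod0 {f : α → ℝ} (hf0 : 0 ≤ f) : 0 ≤ fun x : ι → α => ∏ i, f (x i) :=
    fun x => Finset.prod_nonneg fun i _ => hf0 _
  have hprod1 {f : α → ℝ} (hf1 : ∫ x, f x ∂μ = 1) :
      ∫ x : ι → α, ∏ i, f (x i) ∂(Measure.pi fun _ => μ) = 1 := by
    rw [integral_fintype_prod_eq_pow, hf1, one_pow]
  have haff : ∫ x : ι → α, √(∏ i, p (x i)) * √(∏ i, q (x i)) ∂(Measure.pi fun _ => μ) =
      (∫ x, √(p x) * √(q x) ∂μ) ^ Fintype.card ι := by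
    simp only [Real.sqrt_prod _ fun i _ => hp0 _, Real.sqrt_prod _ fun i _ => hq0 _,
      ← Finset.prod_mul_distrib]
    exact integral_fintype_prod_eq_pow (fun y => √(p y) * √(q y))
  rw [Measure.pi_withDensity_ofReal (fun _ => hp0) (fun _ => hp),
    Measure.pi_withDensity_ofReal (fun _ => hq0) (fun _ => hq), pow_mul', ← haff]
  exact tvDist_withDensity_ofReal_le (hprod0 hp0) (hprod0 hq0) (Integrable.fintype_prod fun _ => hp)
    (Integrable.fintype_prod fun _ => hq) (hprod1 hp1) (hprod1 hq1)

end Product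

noncomputable def gaussianBhattacharyya (m σ m' σ' : ℝ) : ℝ :=
  √(2 * σ * σ' / (σ ^ 2 + σ' ^ 2)) * exp (-((m - m') ^ 2 / (4 * (σ ^ 2 + σ' ^ 2))))

theorem sqrt_gaussianPDFReal_mul_sqrt (m m' : ℝ) {σ σ' : ℝ} (hσ : 0 < σ) (hσ' : 0 < σ') (y : ℝ) :
    √(gaussianPDFReal m (σ.toNNReal ^ 2) y) * √(gaussianPDFReal m' (σ'.toNNReal ^ 2) y) =
      (√(2 * π * (σ * σ')))⁻¹ * exp (-((m - m') ^ 2 / (4 * (σ ^ 2 + σ' ^ 2)))) *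
        exp (-((σ ^ 2 + σ' ^ 2) / (4 * σ ^ 2 * σ' ^ 2)) *
          (y - (m * σ' ^ 2 + m' * σ ^ 2) / (σ ^ 2 + σ' ^ 2)) ^ 2) := by
  have hpdf (μ s : ℝ) (hs : 0 < s) : gaussianPDFReal μ (s.toNNReal ^ 2) y =
      (√(2 * π) * s)⁻¹ * exp (-(y - μ) ^ 2 / (2 * s ^ 2)) := by
    rw [gaussianPDFReal, NNReal.coe_pow, Real.coe_toNNReal _ hs.le, Real.sqrt_mul (by positivity),
      Real.sqrt_sq hs.le]
  -- completing the square in `y`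
  have hexp : -(y - m) ^ 2 / (2 * σ ^ 2) + -(y - m') ^ 2 / (2 * σ' ^ 2) =
      let X := -((m - m') ^ 2 / (4 * (σ ^ 2 + σ' ^ 2))) +
        -((σ ^ 2 + σ' ^ 2) / (4 * σ ^ 2 * σ' ^ 2)) *
          (y - (m * σ' ^ 2 + m' * σ ^ 2) / (σ ^ 2 + σ' ^ 2)) ^ 2
      X + X := by
    field_simp
    ring
  have hconst : (√(2 * π) * σ)⁻¹ * (√(2 * π) * σ')⁻¹ = ((√(2 * π * (σ * σ')))⁻¹) ^ 2 := by
    rw [inv_pow, Real.sq_sqrt (by positivity), ← mul_inv, mul_mul_mul_comm,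
      Real.mul_self_sqrt (by positivity), mul_assoc]
  rw [← Real.sqrt_mul (gaussianPDFReal_nonneg _ _ _), hpdf m σ hσ, hpdf m' σ' hσ',
    mul_mul_mul_comm, ← exp_add, hexp, exp_add, ← sq, hconst, ← mul_pow,
    Real.sqrt_sq (by positivity), exp_add]
  ring

theorem integral_sqrt_gaussianPDFReal_mul_sqrt (m m' : ℝ) {σ σ' : ℝ} (hσ : 0 < σ)
    (hσ' : 0 < σ') :
    ∫ y, √(gaussianPDFReal m (σ.toNNReal ^ 2) y) * √(gaussianPDFReal m' (σ'.toNNReal ^ 2) y) =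
      gaussianBhattacharyya m σ m' σ' := by
  set S := σ ^ 2 + σ' ^ 2
  set a := S / (4 * σ ^ 2 * σ' ^ 2)
  set t := (m * σ' ^ 2 + m' * σ ^ 2) / S
  have hshift : ∫ y, exp (-a * (y - t) ^ 2) = ∫ y, exp (-a * y ^ 2) :=
    integral_sub_right_eq_self (fun y => exp (-a * y ^ 2)) t
  simp only [sqrt_gaussianPDFReal_mul_sqrt m m' hσ hσ', integral_const_mul]
  rw [hshift, integral_gaussian, gaussianBhattacharyya, mul_right_comm, ← Real.sqrt_inv,
    ← Real.sqrt_mul (by positivity)]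
  congr 2
  simp only [a, S]
  field_simp
  ring

theorem gaussianBhattacharyya_nonneg (m σ m' σ' : ℝ) : 0 ≤ gaussianBhattacharyya m σ m' σ' := by
  unfold gaussianBhattacharyya
  positivity

theorem one_sub_gaussianBhattacharyya_le (m m' : ℝ) {σ σ' : ℝ} (hσ : 0 < σ) (hσ' : 0 < σ') :
    1 - gaussianBhattacharyya m σ m' σ' ≤ ((m - m') ^ 2 + (σ - σ') ^ 2) / (σ ^ 2 + σ' ^ 2) := by
  set S := σ ^ 2 + σ' ^ 2
  set C := (m - m') ^ 2 / (4 * S)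
  set r := √(2 * σ * σ' / S)
  have hS : 0 < S := by positivity
  have hr0 : 0 ≤ r := Real.sqrt_nonneg _
  have hr2 : r ^ 2 = 2 * σ * σ' / S := Real.sq_sqrt (by positivity)
  have hr1 : r ≤ 1 := Real.sqrt_le_one.2 ((div_le_one hS).2 (by nlinarith [sq_nonneg (σ - σ')]))
  have hC : C ≤ (m - m') ^ 2 / S := div_le_div_of_nonneg_left (sq_nonneg _) hS (by linarith)
  have hexp : 1 - C ≤ exp (-C) := by linarith [Real.add_one_le_exp (-C)]
  have hr2' : 1 - r ^ 2 = (σ - σ') ^ 2 / S := by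
    rw [hr2]
    field_simp
    ring
  have hC0 : 0 ≤ C := by positivity
  calc 1 - r * exp (-C) ≤ (1 - r ^ 2) + C := by
        nlinarith [mul_le_mul_of_nonneg_left hexp hr0, mul_le_mul_of_nonneg_right hr1 hC0,
          mul_le_mul_of_nonneg_left hr1 hr0]
    _ ≤ ((m - m') ^ 2 + (σ - σ') ^ 2) / S := by rw [hr2', add_div]; linarith

theorem tvDist_pi_gaussianReal_le {ι : Type*} [Fintype ι] (m m' : ℝ) {σ σ' : ℝ} (hσ : 0 < σ)
    (hσ' : 0 < σ') :
    tvDist (Measure.pi fun _ : ι => gaussianReal m (σ.toNNReal ^ 2))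
        (Measure.pi fun _ : ι => gaussianReal m' (σ'.toNNReal ^ 2)) ≤
      2 * √(1 - gaussianBhattacharyya m σ m' σ' ^ (2 * Fintype.card ι)) := by
  have hv {s : ℝ} (hs : 0 < s) : s.toNNReal ^ 2 ≠ 0 := pow_ne_zero 2 (Real.toNNReal_pos.2 hs).ne'
  simp only [gaussianReal_of_var_ne_zero _ (hv hσ), gaussianReal_of_var_ne_zero _ (hv hσ'),
    gaussianPDF_def, ← integral_sqrt_gaussianPDFReal_mul_sqrt m m' hσ hσ']
  exact tvDist_pi_withDensity_ofReal_le (gaussianPDFReal_nonneg m _) (gaussianPDFReal_nonneg m' _)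
    (integrable_gaussianPDFReal _ _) (integrable_gaussianPDFReal _ _)
    (integral_gaussianPDFReal_eq_one m (hv hσ)) (integral_gaussianPDFReal_eq_one m' (hv hσ'))

theorem one_sub_pow_le_mul_one_sub {t : ℝ} (ht : 0 ≤ t) (k : ℕ) : 1 - t ^ k ≤ k * (1 - t) := by
  have h := one_add_mul_le_pow (by linarith : -2 ≤ t - 1) k
  rw [add_sub_cancel] at h
  linarith

theorem stmt_7_general (m σ : ℝ) (hσ : 0 < σ) (δ : ℝ) (hδ : 0 < δ) (hδσ : δ < σ)
    (m' σ' : ℝ) (hσ' : 0 < σ')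
    (hclose : Real.sqrt ((m - m') ^ 2 + (σ - σ') ^ 2) < δ)
    (n : ℕ) :
    tvDist (Measure.pi fun _ : Fin n => gaussianReal m (Real.toNNReal σ ^ 2))
        (Measure.pi fun _ : Fin n => gaussianReal m' (Real.toNNReal σ' ^ 2)) ≤
      Real.sqrt n * (3 / (σ - δ)) * Real.sqrt ((m - m') ^ 2 + (σ - σ') ^ 2) := by
  set D := √((m - m') ^ 2 + (σ - σ') ^ 2)
  set ρ := gaussianBhattacharyya m σ m' σ'
  have hσδ : 0 < σ - δ := sub_pos.2 hδσ
  have hσ'δ : σ - δ < σ' := by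
    have := Real.abs_le_sqrt (le_add_of_nonneg_left (sq_nonneg (m - m')) : (σ - σ') ^ 2 ≤ _)
    linarith [le_abs_self (σ - σ')]
  have hS : 2 * (σ - δ) ^ 2 ≤ σ ^ 2 + σ' ^ 2 := by
    nlinarith [pow_le_pow_left₀ hσδ.le hσ'δ.le 2,
      pow_le_pow_left₀ hσδ.le (by linarith : σ - δ ≤ σ) 2]
  have hρ : 1 - ρ ^ (2 * n) ≤ n * (D / (σ - δ)) ^ 2 := by
    rw [div_pow, Real.sq_sqrt (by positivity)]
    calc 1 - ρ ^ (2 * n) ≤ (2 * n : ℕ) * (1 - ρ) :=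
          one_sub_pow_le_mul_one_sub (gaussianBhattacharyya_nonneg m σ m' σ') _
      _ ≤ 2 * n * (((m - m') ^ 2 + (σ - σ') ^ 2) / (2 * (σ - δ) ^ 2)) := by
          push_cast
          gcongr
          exact (one_sub_gaussianBhattacharyya_le m m' hσ hσ').trans
            (div_le_div_of_nonneg_left (by positivity) (by positivity) hS)
      _ = n * (((m - m') ^ 2 + (σ - σ') ^ 2) / (σ - δ) ^ 2) := by field_simp
  have hgauss := tvDist_pi_gaussianReal_le (ι := Fin n) m m' hσ hσ'
  rw [Fintype.card_fin] at hgauss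
  calc _ ≤ 2 * √(1 - ρ ^ (2 * n)) := hgauss
    _ ≤ 2 * √(n * (D / (σ - δ)) ^ 2) := by gcongr
    _ = 2 * (√n * (D / (σ - δ))) := by
        rw [Real.sqrt_mul n.cast_nonneg, Real.sqrt_sq (by positivity)]
    _ ≤ 3 * (√n * (D / (σ - δ))) := by gcongr; norm_num
    _ = √n * (3 / (σ - δ)) * D := by ring

/-- **Smoothness of the Gaussian i.i.d. family in variational distance.** Let `θ = (m,σ)` with
`σ > 0` and fix `δ ∈ (0,σ)`. For every `θ' = (m',σ')` with `σ' > 0` and `‖θ - θ'‖ < δ`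
(Euclidean norm on `ℝ²`) and every `n ≥ 1`,
`d(N(m,σ²)^⊗n, N(m',σ'²)^⊗n) ≤ √n · (3/(σ-δ)) · ‖θ - θ'‖`. -/
theorem stmt_7 (m σ : ℝ) (hσ : 0 < σ) (δ : ℝ) (hδ : 0 < δ) (hδσ : δ < σ)
    (m' σ' : ℝ) (hσ' : 0 < σ')
    (hclose : Real.sqrt ((m - m') ^ 2 + (σ - σ') ^ 2) < δ)
    (n : ℕ) (hn : 1 ≤ n) :
    tvDist (Measure.pi fun _ : Fin n => gaussianReal m (Real.toNNReal σ ^ 2))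
        (Measure.pi fun _ : Fin n => gaussianReal m' (Real.toNNReal σ' ^ 2)) ≤
      Real.sqrt n * (3 / (σ - δ)) * Real.sqrt ((m - m') ^ 2 + (σ - σ') ^ 2) :=
  stmt_7_general m σ hσ δ hδ hδσ m' σ' hσ' hclose n
end

section
/- Let { P_θ : θ ∈ Λ } be a family of probability measures on a measurable space Z, all absolutely continuous with respect to a σ-finite measure ν, with densities p_θ = dP_θ/dν, and let 𝒜 be the Yatracos class 𝒜 = { { z ∈ Z : p_θ(z) > p_{θ'}(z) } : θ, θ' ∈ Λ, θ ≠ θ' }. Let μ be any probability measure on Z, and for θ ∈ Λ define U_θ = sup_{A ∈ 𝒜} |P_θ(A) − μ(A)|. Let θ₀ ∈ Λ, let ε > 0, and suppose θ* ∈ Λ satisfies U_{θ*} ≤ inf_{θ ∈ Λ} U_θ + ε. Then ∫_Z |p_{θ₀}(z) − p_{θ*}(z)| dν(z) ≤ 4 U_{θ₀} + 3 ε. -/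
/-!
Scheffé's identity writes `∫ |p_{θ₀} - p_{θ*}| dν` as `2 (P_{θ₀}(A) - P_{θ*}(A))` for the set
`A = {p_{θ*} < p_{θ₀}}`. When `θ₀ ≠ θ*` this set lies in the Yatracos class, so `P_{θ₀}(A)` and
`P_{θ*}(A)` are within `U_{θ₀}` and `U_{θ*}` of `μ(A)`, and near-minimality gives
`U_{θ*} ≤ U_{θ₀} + ε`.
-/

open MeasureTheory

section Scheffe

variable {Z : Type*} [MeasurableSpace Z] {ν : Measure Z}

theorem integral_abs_sub_eq_two_mul_setIntegral_sub {f g : Z → ℝ}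
    (hfm : Measurable f) (hgm : Measurable g) (hf : Integrable f ν) (hg : Integrable g ν)
    (hfg : ∫ z, f z ∂ν = ∫ z, g z ∂ν) :
    ∫ z, |f z - g z| ∂ν = 2 * ∫ z in {z | g z < f z}, (f z - g z) ∂ν := by
  set A := {z | g z < f z}
  have hA : MeasurableSet A := measurableSet_lt hgm hfm
  have hd : Integrable (fun z => f z - g z) ν := hf.sub hg
  have on_A : ∫ z in A, |f z - g z| ∂ν = ∫ z in A, (f z - g z) ∂ν :=
    setIntegral_congr_fun hA fun z hz => abs_of_pos (sub_pos.mpr hz)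
  have on_compl : ∫ z in Aᶜ, |f z - g z| ∂ν = -∫ z in Aᶜ, (f z - g z) ∂ν := by
    rw [← integral_neg]
    exact setIntegral_congr_fun hA.compl fun z hz => abs_of_nonpos (sub_nonpos.mpr (not_lt.mp hz))
  have total : ∫ z in A, (f z - g z) ∂ν + ∫ z in Aᶜ, (f z - g z) ∂ν = 0 := by
    rw [integral_add_compl hA hd, integral_sub hf hg, hfg, sub_self]
  rw [← integral_add_compl hA hd.abs, on_A, on_compl]
  linarith

variable {P Q : Measure Z} {p q : Z → ℝ}

theorem integrable_of_eq_withDensity_ofReal [IsFiniteMeasure P] (hpm : Measurable p)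
    (hpnn : ∀ z, 0 ≤ p z) (hP : P = ν.withDensity fun z => ENNReal.ofReal (p z)) :
    Integrable p ν := by
  refine (lintegral_ofReal_ne_top_iff_integrable hpm.aestronglyMeasurable
    (ae_of_all _ hpnn)).mp ?_
  rw [← setLIntegral_univ, ← withDensity_apply _ MeasurableSet.univ, ← hP]
  exact measure_ne_top P _

theorem setIntegral_eq_measureReal_of_eq_withDensity_ofReal [IsFiniteMeasure P]
    (hpm : Measurable p) (hpnn : ∀ z, 0 ≤ p z)
    (hP : P = ν.withDensity fun z => ENNReal.ofReal (p z)) {s : Set Z} (hs : MeasurableSet s) :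
    ∫ z in s, p z ∂ν = P.real s := by
  have hp := integrable_of_eq_withDensity_ofReal hpm hpnn hP
  rw [measureReal_def, hP, withDensity_apply _ hs,
    ← ofReal_integral_eq_lintegral_ofReal hp.restrict (ae_of_all _ hpnn),
    ENNReal.toReal_ofReal (setIntegral_nonneg hs fun z _ => hpnn z)]

theorem integral_abs_sub_eq_two_mul_measureReal_sub [IsProbabilityMeasure P]
    [IsProbabilityMeasure Q] (hpm : Measurable p) (hqm : Measurable q)
    (hpnn : ∀ z, 0 ≤ p z) (hqnn : ∀ z, 0 ≤ q z)
    (hP : P = ν.withDensity fun z => ENNReal.ofReal (p z))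
    (hQ : Q = ν.withDensity fun z => ENNReal.ofReal (q z)) :
    ∫ z, |p z - q z| ∂ν = 2 * (P.real {z | q z < p z} - Q.real {z | q z < p z}) := by
  have hA : MeasurableSet {z | q z < p z} := measurableSet_lt hqm hpm
  have hp := integrable_of_eq_withDensity_ofReal hpm hpnn hP
  have hq := integrable_of_eq_withDensity_ofReal hqm hqnn hQ
  have total_eq : ∫ z, p z ∂ν = ∫ z, q z ∂ν := by
    rw [← setIntegral_univ, ← setIntegral_univ (f := q),
      setIntegral_eq_measureReal_of_eq_withDensity_ofReal hpm hpnn hP MeasurableSet.univ,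
      setIntegral_eq_measureReal_of_eq_withDensity_ofReal hqm hqnn hQ MeasurableSet.univ,
      probReal_univ (μ := P), probReal_univ (μ := Q)]
  rw [integral_abs_sub_eq_two_mul_setIntegral_sub hpm hqm hp hq total_eq,
    integral_sub hp.restrict hq.restrict,
    setIntegral_eq_measureReal_of_eq_withDensity_ofReal hpm hpnn hP hA,
    setIntegral_eq_measureReal_of_eq_withDensity_ofReal hqm hqnn hQ hA]

end Scheffe

section Yatracos

variable {Z : Type*} [MeasurableSpace Z] {P μ : Measure Z} [IsProbabilityMeasure P]
  [IsProbabilityMeasure μ]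

theorem abs_measureReal_sub_le_one (s : Set Z) : |P.real s - μ.real s| ≤ 1 :=
  abs_sub_le_of_nonneg_of_le measureReal_nonneg measureReal_le_one
    measureReal_nonneg measureReal_le_one

theorem abs_measureReal_sub_le_iSup {𝒜 : Set (Set Z)} {A : Set Z} (hA : A ∈ 𝒜) :
    |P.real A - μ.real A| ≤ ⨆ B : 𝒜, |P.real B - μ.real B| :=
  le_ciSup (f := fun B : 𝒜 => |P.real B - μ.real B|)
    ⟨1, by rintro _ ⟨B, rfl⟩; exact abs_measureReal_sub_le_one _⟩ ⟨A, hA⟩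

end Yatracos

theorem stmt_15_general {Z ι : Type*} [MeasurableSpace Z]
    (ν : Measure Z)
    (P : ι → Measure Z) (hprob : ∀ θ, IsProbabilityMeasure (P θ))
    (p : ι → Z → ℝ)
    (hpmeas : ∀ θ, Measurable (p θ)) (hpnn : ∀ θ z, 0 ≤ p θ z)
    (hdens : ∀ θ, P θ = ν.withDensity (fun z => ENNReal.ofReal (p θ z)))
    (𝒜 : Set (Set Z))
    (h𝒜 : 𝒜 = {A | ∃ θ θ' : ι, θ ≠ θ' ∧ A = {z | p θ' z < p θ z}})
    (μ : Measure Z) [IsProbabilityMeasure μ]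
    (U : ι → ℝ)
    (hU : ∀ θ, U θ = ⨆ A : 𝒜, |(P θ (A : Set Z)).toReal - (μ (A : Set Z)).toReal|)
    (θ₀ : ι) (ε : ℝ)
    (θstar : ι) (hmin : U θstar ≤ (⨅ θ, U θ) + ε) :
    ∫ z, |p θ₀ z - p θstar z| ∂ν ≤ 4 * U θ₀ + 3 * ε := by
  have hUnn (θ : ι) : 0 ≤ U θ := (hU θ).symm ▸ Real.iSup_nonneg fun _ => abs_nonneg _
  have hbdd : BddBelow (Set.range U) := ⟨0, by rintro _ ⟨θ, rfl⟩; exact hUnn θ⟩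
  have hε : 0 ≤ ε := by linarith [ciInf_le hbdd θstar]
  have hstar : U θstar ≤ U θ₀ + ε := by linarith [ciInf_le hbdd θ₀]
  by_cases hne : θ₀ = θstar
  · subst hne
    simp only [sub_self, abs_zero, integral_zero]
    linarith [hUnn θ₀]
  have hle (θ : ι) {A : Set Z} (hA : A ∈ 𝒜) : |(P θ).real A - μ.real A| ≤ U θ := by
    have := hprob θ
    rw [hU θ]
    exact abs_measureReal_sub_le_iSup hA
  have hA : {z | p θstar z < p θ₀ z} ∈ 𝒜 := h𝒜 ▸ ⟨θ₀, θstar, hne, rfl⟩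
  have := hprob θ₀
  have := hprob θstar
  rw [integral_abs_sub_eq_two_mul_measureReal_sub (hpmeas θ₀) (hpmeas θstar) (hpnn θ₀)
    (hpnn θstar) (hdens θ₀) (hdens θstar)]
  linarith [abs_le.mp (hle θ₀ hA), abs_le.mp (hle θstar hA)]

/-- **Deterministic property of the Devroye–Lugosi minimum-distance estimator.** Let
`{P_θ : θ ∈ Λ}` have densities `p_θ` w.r.t. a σ-finite measure `ν`, let `𝒜` be the Yatracos
class, let `μ` be any probability measure, and let `U_θ = sup_{A ∈ 𝒜} |P_θ(A) - μ(A)|`. If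
`θ*` satisfies `U_{θ*} ≤ inf_θ U_θ + ε`, then `∫ |p_{θ₀} - p_{θ*}| dν ≤ 4 U_{θ₀} + 3ε`. -/
theorem stmt_15 {Z ι : Type*} [MeasurableSpace Z]
    (ν : Measure Z) [SigmaFinite ν]
    (P : ι → Measure Z) (hprob : ∀ θ, IsProbabilityMeasure (P θ))
    (p : ι → Z → ℝ)
    (hpmeas : ∀ θ, Measurable (p θ)) (hpnn : ∀ θ z, 0 ≤ p θ z)
    (hdens : ∀ θ, P θ = ν.withDensity (fun z => ENNReal.ofReal (p θ z)))
    (𝒜 : Set (Set Z))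
    (h𝒜 : 𝒜 = {A | ∃ θ θ' : ι, θ ≠ θ' ∧ A = {z | p θ' z < p θ z}})
    (μ : Measure Z) [IsProbabilityMeasure μ]
    (U : ι → ℝ)
    (hU : ∀ θ, U θ = ⨆ A : 𝒜, |(P θ (A : Set Z)).toReal - (μ (A : Set Z)).toReal|)
    (θ₀ : ι) (ε : ℝ) (hε : 0 < ε)
    (θstar : ι) (hmin : U θstar ≤ (⨅ θ, U θ) + ε) :
    ∫ z, |p θ₀ z - p θstar z| ∂ν ≤ 4 * U θ₀ + 3 * ε :=
  stmt_15_general ν P hprob p hpmeas hpnn hdens 𝒜 h𝒜 μ U hU θ₀ ε θstar hmin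
end
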